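/- In any generations network with generation size K associated to symmetric observation sets with parameters (d, c) satisfying d ≥ 2 and c < d, the aggregative efficiency exists and equals lim_{i→∞} r_i/i = (2 − 1/K) · (1/K). In particular, it depends only on the generation size K and coincides with the aggregative efficiency of the maximal generations network with the same K. -/

import Mathlib

open Matrix Finset Filter

/-- The equilibrium weight vectors of the sequential social-learning model. -/
noncomputable def eqW (Net : ℕ → Finset ℕ) (i : ℕ) : ℕ → ℝ :=
  Nat.strongRecOn i (fun n prev =>
    let nb := (Net n).filter (fun j => j < n)
    if nb.Nonempty then
      let What : Matrix {j // j ∈ nb} (Fin (n - 1)) ℝ :=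
        Matrix.of (fun j m => prev j.1 (Finset.mem_filter.mp j.2).2 (m.1 + 1))
      let beta : {j // j ∈ nb} → ℝ :=
        Matrix.vecMul (fun j => ∑ m, What j m) ((What * What.transpose)⁻¹)
      fun m => (if m = n then (1 : ℝ) else 0) +
        ∑ j : {j // j ∈ nb}, beta j * prev j.1 (Finset.mem_filter.mp j.2).2 m
    else fun m => if m = n then (1 : ℝ) else 0)

/-- The number of signals aggregated by agent `i`: `r_i = Σ_j W_i(j)`. -/
noncomputable def rcount (Net : ℕ → Finset ℕ) (i : ℕ) : ℝ :=
  ∑ j ∈ Finset.range (i + 1), eqW Net i j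

/-- The generations network with generation size `K` and observation sets `Ψ`:
`N(i) = ∅` for `1 ≤ i ≤ K`, and `N((t−1)K+k) = {(t−2)K+ψ : ψ ∈ Ψ_k}` for `t ≥ 2`,
`1 ≤ k ≤ K`. -/
def genNet (K : ℕ) (Ψ : ℕ → Finset ℕ) : ℕ → Finset ℕ := fun i =>
  if i ≤ K then ∅
  else (Ψ ((i - 1) % K + 1)).image (fun ψ => ((i - 1) / K - 1) * K + ψ)

/-!
Within each generation the equilibrium weight vectors are equicorrelated: every agent of
generation `t` aggregates `r_t` signals, `‖W_i‖² = r_t`, and two distinct agents of the same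
generation have `⟪W_i, W_j⟫ = r_t - u_t`. The Gram matrix of a neighbourhood is then
`(a - b) I + b J`, whose inverse is explicit, so all weights `β_{i,k}` equal `r_t / s_t` with
`s_t = d r_t - (d - 1) u_t`, and `(r_t, u_t)` obey a closed recursion. The symmetric-design
identity `d² = d + (K - 1) c` (the incidence matrix is invertible) forces `c ≥ 1`; then
`u_t / r_t → 0`, hence `r_t / s_t → 1/d`, `u_t → d² / (d² - d + c)` and
`r_{t+1} - r_t → 1 + d (d - 1) / (d² - d + c) = 2 - 1/K`. Agent `i` lies in generation
`⌊(i - 1) / K⌋`, which divides the limit by `K`.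
-/

open Topology

theorem sum_sum_ite_eq {α : Type*} [DecidableEq α] (E E' : Finset α) (x y : ℝ) :
    ∑ j ∈ E, ∑ j' ∈ E', (if j = j' then x else y) = #E * #E' * y + #(E ∩ E') * (x - y) := by
  have hsplit : ∀ j j' : α, (if j = j' then x else y) = y + if j = j' then x - y else 0 := by
    intro j j'
    split_ifs <;> ring
  simp only [hsplit, sum_add_distrib, sum_const, nsmul_eq_mul, sum_ite_eq, ← sum_filter,
    filter_mem_eq_inter]
  ring

theorem sum_ite_mul_ite_eq {α : Type*} [DecidableEq α] {s : Finset α} {a : α} (ha : a ∈ s)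
    (b : α) :
    ∑ m ∈ s, (if m = a then (1 : ℝ) else 0) * (if m = b then 1 else 0) =
      if a = b then 1 else 0 := by
  rw [sum_eq_single_of_mem a ha fun m _ hm => by rw [if_neg hm, zero_mul], if_pos rfl, one_mul]

theorem sum_fin_pred_succ_eq_sum_Ico (n : ℕ) (f : ℕ → ℝ) :
    ∑ m : Fin (n - 1), f (m.1 + 1) = ∑ m ∈ Ico 1 n, f m := by
  rw [Fin.sum_univ_eq_sum_range (fun m => f (m + 1)), sum_Ico_eq_sum_range]
  simp only [add_comm]

def nbh (Net : ℕ → Finset ℕ) (n : ℕ) : Finset ℕ := (Net n).filter (fun j => j < n)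

-- The matrix `Ŵ` and the vector `β_n` of the definition of `eqW`.
noncomputable def nbhWeights (Net : ℕ → Finset ℕ) (n : ℕ) :
    Matrix {j // j ∈ nbh Net n} (Fin (n - 1)) ℝ :=
  of fun j m => eqW Net j.1 (m.1 + 1)

noncomputable def eqCoeff (Net : ℕ → Finset ℕ) (n : ℕ) : {j // j ∈ nbh Net n} → ℝ :=
  (fun j => ∑ m, nbhWeights Net n j m) ᵥ* (nbhWeights Net n * (nbhWeights Net n)ᵀ)⁻¹

theorem eqW_apply (Net : ℕ → Finset ℕ) (n m : ℕ) :
    eqW Net n m = (if m = n then 1 else 0) +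
      ∑ j : {j // j ∈ nbh Net n}, eqCoeff Net n j * eqW Net j m := by
  have hunfold : eqW Net n = if (nbh Net n).Nonempty then
      fun m => (if m = n then (1 : ℝ) else 0) +
        ∑ j : {j // j ∈ nbh Net n}, eqCoeff Net n j * eqW Net j m
      else fun m => if m = n then (1 : ℝ) else 0 := by
    rw [eqW, Nat.strongRecOn, WellFounded.fix_eq]
    rfl
  by_cases h : (nbh Net n).Nonempty
  · rw [hunfold, if_pos h]
  · have : IsEmpty {j // j ∈ nbh Net n} := ⟨fun j => h ⟨j.1, j.2⟩⟩
    rw [hunfold, if_neg h, Fintype.sum_empty, add_zero]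

theorem eqW_apply_of_lt (Net : ℕ → Finset ℕ) {i m : ℕ} (h : i < m) : eqW Net i m = 0 := by
  induction i using Nat.strong_induction_on with
  | _ i ih =>
    rw [eqW_apply, if_neg h.ne', zero_add]
    refine Fintype.sum_eq_zero _ fun j => ?_
    have hj : j.1 < i := (mem_filter.mp j.2).2
    rw [ih j.1 hj (hj.trans h), mul_zero]

theorem eqW_apply_zero {Net : ℕ → Finset ℕ} (h0 : ∀ n, 0 ∉ Net n) {i : ℕ} (hi : i ≠ 0) :
    eqW Net i 0 = 0 := by
  induction i using Nat.strong_induction_on with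
  | _ i ih =>
    rw [eqW_apply, if_neg hi.symm, zero_add]
    refine Fintype.sum_eq_zero _ fun j => ?_
    have hj := mem_filter.mp j.2
    rw [ih j.1 hj.2 (ne_of_mem_of_not_mem hj.1 (h0 i)), mul_zero]

theorem eqW_apply_of_nbh_eq_empty {Net : ℕ → Finset ℕ} {n : ℕ} (h : nbh Net n = ∅) (m : ℕ) :
    eqW Net n m = if m = n then 1 else 0 := by
  have : IsEmpty {j // j ∈ nbh Net n} := ⟨fun j => by simpa [h] using j.2⟩
  rw [eqW_apply, Fintype.sum_empty, add_zero]

section Equicorrelated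

variable {ι : Type*} [DecidableEq ι]

def equicorrMatrix (ι : Type*) [DecidableEq ι] (a b : ℝ) : Matrix ι ι ℝ :=
  of fun i j => if i = j then a else b

theorem equicorrMatrix_apply_eq_ite_add (a b : ℝ) (i j : ι) :
    equicorrMatrix ι a b i j = (if i = j then a - b else 0) + b := by
  by_cases h : i = j <;> simp [equicorrMatrix, h]

variable [Fintype ι]

theorem sum_equicorrMatrix_apply (a b : ℝ) (j : ι) :
    ∑ i, equicorrMatrix ι a b i j = a + (Fintype.card ι - 1) * b := by
  simp only [equicorrMatrix_apply_eq_ite_add, sum_add_distrib, sum_ite_eq',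
    mem_univ, if_true, sum_const, card_univ, nsmul_eq_mul]
  ring

theorem equicorrMatrix_mulVec_const (a b x : ℝ) :
    equicorrMatrix ι a b *ᵥ (fun _ => x) = fun _ => (a + (Fintype.card ι - 1) * b) * x := by
  ext i
  simp only [mulVec, dotProduct, equicorrMatrix_apply_eq_ite_add, add_mul, ite_mul, zero_mul,
    sum_add_distrib, sum_ite_eq, mem_univ, if_true, sum_const,
    card_univ, nsmul_eq_mul]
  ring

theorem equicorrMatrix_mul_apply (a b : ℝ) (X : Matrix ι ι ℝ) (i j : ι) :
    (equicorrMatrix ι a b * X) i j = (a - b) * X i j + b * ∑ k, X k j := by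
  simp only [mul_apply, equicorrMatrix_apply_eq_ite_add, add_mul, sum_add_distrib, ite_mul,
    zero_mul, sum_ite_eq, mem_univ, if_true, mul_sum]

theorem equicorrMatrix_mul_eq_one {a b : ℝ} (hu : a - b ≠ 0)
    (hs : a + (Fintype.card ι - 1) * b ≠ 0) :
    equicorrMatrix ι a b *
      equicorrMatrix ι ((a + (Fintype.card ι - 2) * b) / ((a - b) * (a + (Fintype.card ι - 1) * b)))
        (-b / ((a - b) * (a + (Fintype.card ι - 1) * b))) = 1 := by
  ext i j
  rw [equicorrMatrix_mul_apply, sum_equicorrMatrix_apply, one_apply]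
  generalize (Fintype.card ι : ℝ) = n at *
  set D := (a - b) * (a + (n - 1) * b) with hD
  have hD0 : D ≠ 0 := mul_ne_zero hu hs
  by_cases h : i = j <;> simp only [equicorrMatrix, of_apply, h, if_true, if_false] <;>
    field_simp <;> rw [hD] <;> ring

theorem sum_inv_equicorrMatrix_apply {a b : ℝ} (hu : a - b ≠ 0)
    (hs : a + (Fintype.card ι - 1) * b ≠ 0) (j : ι) :
    ∑ i, (equicorrMatrix ι a b)⁻¹ i j = (a + (Fintype.card ι - 1) * b)⁻¹ := by
  rw [inv_eq_right_inv (equicorrMatrix_mul_eq_one hu hs), sum_equicorrMatrix_apply]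
  generalize (Fintype.card ι : ℝ) = n at *
  field_simp
  ring

end Equicorrelated

theorem sq_eq_of_mul_transpose_eq_equicorrMatrix {ι : Type*} [Fintype ι] [DecidableEq ι]
    [Nonempty ι] {N : Matrix ι ι ℝ} {d a b : ℝ} (hrow : ∀ i, ∑ j, N i j = d)
    (hgram : N * Nᵀ = equicorrMatrix ι a b) (hu : a - b ≠ 0)
    (hs : a + (Fintype.card ι - 1) * b ≠ 0) :
    d ^ 2 = a + (Fintype.card ι - 1) * b := by
  set s := a + (Fintype.card ι - 1) * b
  have hN1 : N *ᵥ (fun _ => 1) = fun _ => d := by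
    ext i; simp only [mulVec, dotProduct, mul_one, hrow]
  have hdet : N.det ≠ 0 := by
    have h := (isUnit_det_of_right_inverse (equicorrMatrix_mul_eq_one hu hs)).ne_zero
    rw [← hgram, det_mul, det_transpose] at h
    exact left_ne_zero_of_mul h
  -- `N` is invertible and `N * Nᵀ` has constant row sums, so `Nᵀ` has constant row sums too
  have hcol : d • (Nᵀ *ᵥ fun _ => 1) = fun _ => s := by
    refine sub_eq_zero.mp (eq_zero_of_mulVec_eq_zero hdet ?_)
    rw [mulVec_sub, mulVec_smul, mulVec_mulVec, hgram, equicorrMatrix_mulVec_const]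
    ext i
    simp only [mul_one, Pi.sub_apply, Pi.smul_apply, smul_eq_mul, mulVec, dotProduct, ← sum_mul,
      hrow, Pi.zero_apply]
    ring
  have htotal := congrArg (fun v => (fun _ => (1 : ℝ)) ⬝ᵥ v) hcol
  simp only [dotProduct_smul, dotProduct_mulVec, vecMul_transpose, hN1] at htotal
  simp only [dotProduct, mul_one, sum_const, card_univ, nsmul_eq_mul, smul_eq_mul, one_mul]
    at htotal
  refine mul_left_cancel₀ (Nat.cast_ne_zero.mpr Fintype.card_ne_zero : (Fintype.card ι : ℝ) ≠ 0) ?_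
  linear_combination htotal

theorem sq_eq_of_card_inter_eq {α : Type*} [DecidableEq α] {V : Finset α} {B : α → Finset α}
    {d c : ℕ} (hV : V.Nonempty) (hsub : ∀ k ∈ V, B k ⊆ V) (hcard : ∀ k ∈ V, #(B k) = d)
    (hinter : ∀ k₁ ∈ V, ∀ k₂ ∈ V, k₁ ≠ k₂ → #(B k₁ ∩ B k₂) = c) (hcd : c < d) :
    (d : ℝ) ^ 2 = d + (#V - 1) * c := by
  have hcount : ∀ S ⊆ V, ∑ ψ : V, (if ψ.1 ∈ S then (1 : ℝ) else 0) = #S := by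
    intro S hS
    rw [sum_coe_sort V (fun ψ => if ψ ∈ S then (1 : ℝ) else 0), sum_boole,
      filter_mem_eq_inter, inter_eq_right.mpr hS]
  let N : Matrix V V ℝ := of fun k ψ => if ψ.1 ∈ B k.1 then 1 else 0
  have hgram : N * Nᵀ = equicorrMatrix V d c := by
    ext k k'
    simp only [N, mul_apply, transpose_apply, of_apply, ite_zero_mul_ite_zero, one_mul,
      ← mem_inter]
    rw [hcount _ ((inter_subset_left).trans (hsub k k.2))]
    by_cases h : k = k'
    · simp [equicorrMatrix, h, hcard k'.1 k'.2]
    · simp [equicorrMatrix, h, hinter k k.2 k' k'.2 (Subtype.coe_ne_coe.mpr h)]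
  have : Nonempty V := hV.to_subtype
  have hcd' : (c : ℝ) < d := by exact_mod_cast hcd
  have hV1 : (1 : ℝ) ≤ #V := by exact_mod_cast hV.card_pos
  have hc0 : (0 : ℝ) ≤ c := c.cast_nonneg
  have hrow : ∀ k : V, ∑ ψ, N k ψ = d := fun k =>
    (hcount _ (hsub k k.2)).trans (congrArg _ (hcard k k.2))
  have key := sq_eq_of_mul_transpose_eq_equicorrMatrix hrow hgram (by linarith)
    (by rw [Fintype.card_coe]; nlinarith)
  rwa [Fintype.card_coe] at key

theorem eqW_apply_of_equicorrelated {Net : ℕ → Finset ℕ} {n : ℕ} {ρ β : ℝ}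
    (hsum : ∀ j ∈ nbh Net n, ∑ m ∈ Ico 1 n, eqW Net j m = ρ)
    (hgram : ∀ j ∈ nbh Net n, ∀ j' ∈ nbh Net n,
      ∑ m ∈ Ico 1 n, eqW Net j m * eqW Net j' m = if j = j' then ρ else β)
    (hu : ρ - β ≠ 0) (hs : ρ + (#(nbh Net n) - 1) * β ≠ 0) (m : ℕ) :
    eqW Net n m = (if m = n then 1 else 0) +
      ρ / (ρ + (#(nbh Net n) - 1) * β) * ∑ j ∈ nbh Net n, eqW Net j m := by
  have hrow : ∀ j, ∑ m, nbhWeights Net n j m = ρ := fun j =>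
    (sum_fin_pred_succ_eq_sum_Ico n _).trans (hsum j j.2)
  have hG : nbhWeights Net n * (nbhWeights Net n)ᵀ = equicorrMatrix _ ρ β := by
    ext j j'
    simp only [mul_apply, transpose_apply, nbhWeights, of_apply, equicorrMatrix]
    rw [sum_fin_pred_succ_eq_sum_Ico n (fun m => eqW Net j m * eqW Net j' m),
      hgram j j.2 j' j'.2]
    exact if_congr Subtype.ext_iff.symm rfl rfl
  rw [← Fintype.card_coe] at hs
  have hcoeff : ∀ j, eqCoeff Net n j = ρ / (ρ + (#(nbh Net n) - 1) * β) := by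
    intro j
    simp only [eqCoeff, hrow, hG, vecMul, dotProduct, ← mul_sum,
      sum_inv_equicorrMatrix_apply hu hs, Fintype.card_coe, div_eq_mul_inv]
  rw [eqW_apply]
  simp only [hcoeff, ← mul_sum]
  rw [sum_coe_sort (nbh Net n) (fun j => eqW Net j m)]

-- `genR d c t` is the number of signals aggregated by each agent of generation `t`, and
-- `genR d c t - genU d c t` the inner product of the weight vectors of two distinct such agents.
noncomputable def genStats (d c : ℕ) : ℕ → ℝ × ℝ
  | 0 => (1, 1)
  | t + 1 =>
    let r := (genStats d c t).1
    let u := (genStats d c t).2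
    let s := d * r - (d - 1) * u
    (1 + d * r ^ 2 / s, 1 + (d - c) * (r / s) ^ 2 * u)

noncomputable def genR (d c t : ℕ) : ℝ := (genStats d c t).1

noncomputable def genU (d c t : ℕ) : ℝ := (genStats d c t).2

noncomputable def genS (d c t : ℕ) : ℝ := d * genR d c t - (d - 1) * genU d c t

theorem genR_zero (d c : ℕ) : genR d c 0 = 1 := rfl

theorem genU_zero (d c : ℕ) : genU d c 0 = 1 := rfl

theorem genR_succ (d c t : ℕ) : genR d c (t + 1) = 1 + d * genR d c t ^ 2 / genS d c t := rfl

theorem genU_succ (d c t : ℕ) :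
    genU d c (t + 1) = 1 + (d - c) * (genR d c t / genS d c t) ^ 2 * genU d c t := rfl

theorem genR_le_genS {d c t : ℕ} (hd : 1 ≤ d) (hu : genU d c t ≤ genR d c t) :
    genR d c t ≤ genS d c t := by
  have hd' : (1 : ℝ) ≤ d := by exact_mod_cast hd
  rw [genS]
  nlinarith

theorem genR_bounds {d c : ℕ} (hd : 1 ≤ d) (hcd : c ≤ d) (t : ℕ) :
    (t : ℝ) + 1 ≤ genR d c t ∧ 1 ≤ genU d c t ∧ genU d c t ≤ genR d c t := by
  induction t with
  | zero => simp [genR_zero, genU_zero]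
  | succ t ih =>
    obtain ⟨hr, hu, hur⟩ := ih
    have hd' : (1 : ℝ) ≤ d := by exact_mod_cast hd
    have hcd' : (c : ℝ) ≤ d := by exact_mod_cast hcd
    have hrs := genR_le_genS hd hur
    have hs : 0 < genS d c t := by linarith
    have hds : genS d c t ≤ d * genR d c t := by rw [genS]; nlinarith
    have hratio : genR d c t ≤ d * genR d c t ^ 2 / genS d c t := by
      rw [le_div_iff₀ hs]; nlinarith
    have hgain : (d - c) * (genR d c t / genS d c t) ^ 2 * genU d c t
        ≤ d * genR d c t ^ 2 / genS d c t := by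
      have hus : (d - c) * genU d c t ≤ d * genS d c t := by nlinarith
      calc (d - c) * (genR d c t / genS d c t) ^ 2 * genU d c t
          = (genR d c t / genS d c t) ^ 2 * ((d - c) * genU d c t) := by ring
        _ ≤ (genR d c t / genS d c t) ^ 2 * (d * genS d c t) := by gcongr
        _ = d * genR d c t ^ 2 / genS d c t := by field_simp
    have hgain0 : 0 ≤ (d - c) * (genR d c t / genS d c t) ^ 2 * genU d c t := by
      have : (0 : ℝ) ≤ d - c := by linarith
      positivity
    rw [genR_succ, genU_succ]
    push_cast
    refine ⟨by linarith, by linarith, by linarith⟩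

theorem genS_pos {d c : ℕ} (hd : 1 ≤ d) (hcd : c ≤ d) (t : ℕ) : 0 < genS d c t := by
  obtain ⟨hr, -, hur⟩ := genR_bounds hd hcd t
  have := genR_le_genS hd hur
  have : (0 : ℝ) ≤ t := t.cast_nonneg
  linarith

-- Sums over `Ico 1 N` with `N` beyond the generation run over the whole support of the weight
-- vectors, so they are the coordinate sums and inner products of `W_i` as vectors on `ℕ`.
def GenEquicorrelated (Net : ℕ → Finset ℕ) (K t : ℕ) (ρ υ : ℝ) : Prop :=
  ∀ k ∈ Icc 1 K, (∀ N, t * K + k < N → ∑ m ∈ Ico 1 N, eqW Net (t * K + k) m = ρ) ∧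
    ∀ k' ∈ Icc 1 K, ∀ N, t * K + K < N →
      ∑ m ∈ Ico 1 N, eqW Net (t * K + k) m * eqW Net (t * K + k') m =
        if k = k' then ρ else ρ - υ

section Generations

variable {K : ℕ} {Ψ : ℕ → Finset ℕ}

theorem nbh_genNet_of_le {i : ℕ} (hi : i ≤ K) : nbh (genNet K Ψ) i = ∅ := by
  simp [nbh, genNet, hi]

theorem nbh_genNet_succ_mul_add (hsub : ∀ k ∈ Icc 1 K, Ψ k ⊆ Icc 1 K) {k : ℕ}
    (hk : k ∈ Icc 1 K) (t : ℕ) :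
    nbh (genNet K Ψ) ((t + 1) * K + k) = (Ψ k).image (t * K + ·) := by
  obtain ⟨hk1, hkK⟩ := mem_Icc.mp hk
  have hpred : (t + 1) * K + k - 1 = (k - 1) + (t + 1) * K := by omega
  have hmod : ((t + 1) * K + k - 1) % K + 1 = k := by
    rw [hpred, Nat.add_mul_mod_self_right, Nat.mod_eq_of_lt (by omega)]
    omega
  have hdiv : ((t + 1) * K + k - 1) / K - 1 = t := by
    rw [hpred, Nat.add_mul_div_right _ _ (by omega), Nat.div_eq_of_lt (by omega)]
    omega
  rw [nbh, genNet, if_neg (by nlinarith), hmod, hdiv]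
  refine filter_true_of_mem fun j hj => ?_
  obtain ⟨ψ, hψ, rfl⟩ := mem_image.mp hj
  have := (mem_Icc.mp (hsub k hk hψ)).2
  nlinarith

theorem zero_notMem_genNet (hK : 1 ≤ K) (hsub : ∀ k ∈ Icc 1 K, Ψ k ⊆ Icc 1 K) (n : ℕ) :
    0 ∉ genNet K Ψ n := by
  unfold genNet
  split_ifs
  · exact notMem_empty 0
  · intro h
    obtain ⟨ψ, hψ, hzero⟩ := mem_image.mp h
    have hk : (n - 1) % K + 1 ∈ Icc 1 K :=
      mem_Icc.mpr ⟨by omega, Nat.mod_lt _ (by omega)⟩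
    have := (mem_Icc.mp (hsub _ hk hψ)).1
    omega

theorem genEquicorrelated_zero : GenEquicorrelated (genNet K Ψ) K 0 1 1 := by
  intro k hk
  have hW : ∀ k ∈ Icc 1 K, ∀ m, eqW (genNet K Ψ) (0 * K + k) m = if m = k then 1 else 0 := by
    intro k hk m
    rw [zero_mul, zero_add, eqW_apply_of_nbh_eq_empty (nbh_genNet_of_le (mem_Icc.mp hk).2)]
  obtain ⟨hk1, hkK⟩ := mem_Icc.mp hk
  refine ⟨fun N hN => ?_, fun k' hk' N hN => ?_⟩
  · simp only [hW k hk, sum_ite_eq', mem_Ico]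
    simp only [zero_mul, zero_add] at hN
    rw [if_pos ⟨hk1, hN⟩]
  · simp only [hW k hk, hW k' hk', ite_zero_mul_ite_zero, one_mul, sub_self]
    simp only [zero_mul, zero_add] at hN
    by_cases hkk : k = k'
    · subst hkk
      simp only [and_self, sum_ite_eq', mem_Ico, if_true]
      rw [if_pos ⟨hk1, by omega⟩]
    · rw [if_neg hkk]
      exact sum_eq_zero fun m _ => if_neg fun hm => hkk (hm.1.symm.trans hm.2)

theorem eqW_genNet_succ_mul_add {d : ℕ} (hsub : ∀ k ∈ Icc 1 K, Ψ k ⊆ Icc 1 K)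
    (hcard : ∀ k ∈ Icc 1 K, #(Ψ k) = d) {t : ℕ} {ρ υ : ℝ}
    (h : GenEquicorrelated (genNet K Ψ) K t ρ υ) (hυ : υ ≠ 0) (hσ : d * ρ - (d - 1) * υ ≠ 0)
    {k : ℕ} (hk : k ∈ Icc 1 K) (m : ℕ) :
    eqW (genNet K Ψ) ((t + 1) * K + k) m = (if m = (t + 1) * K + k then 1 else 0) +
      ρ / (d * ρ - (d - 1) * υ) * ∑ ψ ∈ Ψ k, eqW (genNet K Ψ) (t * K + ψ) m := by
  have hnbh := nbh_genNet_succ_mul_add hsub hk t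
  have hmem : ∀ j ∈ nbh (genNet K Ψ) ((t + 1) * K + k), ∃ ψ ∈ Icc 1 K, j = t * K + ψ := by
    intro j hj
    rw [hnbh] at hj
    obtain ⟨ψ, hψ, rfl⟩ := mem_image.mp hj
    exact ⟨ψ, hsub k hk hψ, rfl⟩
  have hd : (#(nbh (genNet K Ψ) ((t + 1) * K + k)) : ℝ) = d := by
    rw [hnbh, card_image_of_injective _ (add_right_injective _), hcard k hk]
  have key := eqW_apply_of_equicorrelated (ρ := ρ) (β := ρ - υ) ?_ ?_ (by rwa [sub_sub_cancel])
    (by rw [hd]; convert hσ using 1; ring) m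
  · rwa [hd, show ρ + (d - 1) * (ρ - υ) = d * ρ - (d - 1) * υ by ring, hnbh,
      sum_image fun _ _ _ _ hψ => add_right_injective _ hψ] at key
  · intro j hj
    obtain ⟨ψ, hψ, rfl⟩ := hmem j hj
    exact (h ψ hψ).1 _ (by have := (mem_Icc.mp hψ).2; have := (mem_Icc.mp hk).1; nlinarith)
  · intro j hj j' hj'
    obtain ⟨ψ, hψ, rfl⟩ := hmem j hj
    obtain ⟨ψ', hψ', rfl⟩ := hmem j' hj'
    rw [(h ψ hψ).2 ψ' hψ' _ (by have := (mem_Icc.mp hk).1; nlinarith)]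
    exact if_congr (add_right_injective _).eq_iff.symm rfl rfl

theorem GenEquicorrelated.sum_Ico_sum {d : ℕ} (hsub : ∀ k ∈ Icc 1 K, Ψ k ⊆ Icc 1 K)
    (hcard : ∀ k ∈ Icc 1 K, #(Ψ k) = d) {t : ℕ} {ρ υ : ℝ}
    (h : GenEquicorrelated (genNet K Ψ) K t ρ υ) {k : ℕ} (hk : k ∈ Icc 1 K) {N : ℕ}
    (hN : t * K + K < N) :
    ∑ m ∈ Ico 1 N, ∑ ψ ∈ Ψ k, eqW (genNet K Ψ) (t * K + ψ) m = d * ρ := by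
  rw [sum_comm, sum_congr rfl fun ψ hψ => (h ψ (hsub k hk hψ)).1 N ?_, sum_const, hcard k hk,
    nsmul_eq_mul]
  have := (mem_Icc.mp (hsub k hk hψ)).2
  omega

theorem GenEquicorrelated.sum_Ico_sum_mul_sum {d c : ℕ} (hsub : ∀ k ∈ Icc 1 K, Ψ k ⊆ Icc 1 K)
    (hcard : ∀ k ∈ Icc 1 K, #(Ψ k) = d)
    (hinter : ∀ k₁ ∈ Icc 1 K, ∀ k₂ ∈ Icc 1 K, k₁ ≠ k₂ → #(Ψ k₁ ∩ Ψ k₂) = c)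
    {t : ℕ} {ρ υ : ℝ} (h : GenEquicorrelated (genNet K Ψ) K t ρ υ) {k k' : ℕ}
    (hk : k ∈ Icc 1 K) (hk' : k' ∈ Icc 1 K) {N : ℕ} (hN : t * K + K < N) :
    ∑ m ∈ Ico 1 N, (∑ ψ ∈ Ψ k, eqW (genNet K Ψ) (t * K + ψ) m) *
        ∑ ψ' ∈ Ψ k', eqW (genNet K Ψ) (t * K + ψ') m =
      d ^ 2 * (ρ - υ) + (if k = k' then (d : ℝ) else c) * υ := by
  simp only [sum_mul_sum]
  rw [sum_comm]
  simp only [sum_comm (s := Ico 1 N)]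
  rw [sum_congr rfl fun ψ hψ => sum_congr rfl fun ψ' hψ' =>
    (h ψ (hsub k hk hψ)).2 ψ' (hsub k' hk' hψ') N hN, sum_sum_ite_eq, hcard k hk, hcard k' hk']
  by_cases hkk : k = k'
  · subst hkk
    rw [inter_self, hcard k hk, if_pos rfl]
    ring
  · rw [hinter k hk k' hk' hkk, if_neg hkk]
    ring

theorem GenEquicorrelated.succ {d c : ℕ} (hsub : ∀ k ∈ Icc 1 K, Ψ k ⊆ Icc 1 K)
    (hcard : ∀ k ∈ Icc 1 K, #(Ψ k) = d)
    (hinter : ∀ k₁ ∈ Icc 1 K, ∀ k₂ ∈ Icc 1 K, k₁ ≠ k₂ → #(Ψ k₁ ∩ Ψ k₂) = c)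
    {t : ℕ} {ρ υ : ℝ} (h : GenEquicorrelated (genNet K Ψ) K t ρ υ) (hυ : υ ≠ 0)
    (hσ : d * ρ - (d - 1) * υ ≠ 0) :
    GenEquicorrelated (genNet K Ψ) K (t + 1) (1 + d * ρ ^ 2 / (d * ρ - (d - 1) * υ))
      (1 + (d - c) * (ρ / (d * ρ - (d - 1) * υ)) ^ 2 * υ) := by
  set σ := d * ρ - (d - 1) * υ
  set W := eqW (genNet K Ψ)
  set F : ℕ → ℕ → ℝ := fun k m => ∑ ψ ∈ Ψ k, W (t * K + ψ) m
  have hW : ∀ k ∈ Icc 1 K, ∀ m, W ((t + 1) * K + k) m =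
      (if m = (t + 1) * K + k then 1 else 0) + ρ / σ * F k m :=
    fun k hk m => eqW_genNet_succ_mul_add hsub hcard h hυ hσ hk m
  have hF : ∀ k ∈ Icc 1 K, ∀ m, t * K + K < m → F k m = 0 := by
    intro k hk m hm
    refine sum_eq_zero fun ψ hψ => eqW_apply_of_lt _ ?_
    have := (mem_Icc.mp (hsub k hk hψ)).2
    omega
  intro k hk
  obtain ⟨hk1, hkK⟩ := mem_Icc.mp hk
  refine ⟨fun N hN => ?_, fun k' hk' N hN => ?_⟩
  · rw [sum_congr rfl fun m _ => hW k hk m, sum_add_distrib, sum_ite_eq', ← mul_sum,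
      if_pos (mem_Ico.mpr ⟨by omega, hN⟩), h.sum_Ico_sum hsub hcard hk (by nlinarith)]
    field_simp
  · have hk'1 := (mem_Icc.mp hk').1
    -- the cross terms vanish: `F k` is supported on generation `t`
    have hprod : ∀ m, W ((t + 1) * K + k) m * W ((t + 1) * K + k') m =
        (if m = (t + 1) * K + k then 1 else 0) * (if m = (t + 1) * K + k' then 1 else 0) +
          (ρ / σ) ^ 2 * (F k m * F k' m) := by
      intro m
      rw [hW k hk, hW k' hk']
      by_cases hm : t * K + K < m
      · simp [hF k hk m hm, hF k' hk' m hm]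
      · rw [if_neg (by nlinarith), if_neg (by nlinarith)]
        ring
    rw [sum_congr rfl fun m _ => hprod m, sum_add_distrib,
      sum_ite_mul_ite_eq (mem_Ico.mpr ⟨by omega, by nlinarith⟩), ← mul_sum,
      h.sum_Ico_sum_mul_sum hsub hcard hinter hk hk' (by nlinarith)]
    by_cases hkk : k = k'
    · simp only [hkk, if_true]
      field_simp
      ring
    · simp only [hkk, if_false, (add_right_injective _).eq_iff]
      field_simp
      ring

theorem genEquicorrelated_genStats {d c : ℕ} (hsub : ∀ k ∈ Icc 1 K, Ψ k ⊆ Icc 1 K)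
    (hcard : ∀ k ∈ Icc 1 K, #(Ψ k) = d)
    (hinter : ∀ k₁ ∈ Icc 1 K, ∀ k₂ ∈ Icc 1 K, k₁ ≠ k₂ → #(Ψ k₁ ∩ Ψ k₂) = c)
    (hd : 1 ≤ d) (hcd : c ≤ d) (t : ℕ) :
    GenEquicorrelated (genNet K Ψ) K t (genR d c t) (genU d c t) := by
  induction t with
  | zero => exact genEquicorrelated_zero
  | succ t ih =>
    have hu := (genR_bounds hd hcd t).2.1
    exact ih.succ hsub hcard hinter (by linarith) (genS_pos hd hcd t).ne'

theorem rcount_genNet {d c : ℕ} (hK : 1 ≤ K) (hsub : ∀ k ∈ Icc 1 K, Ψ k ⊆ Icc 1 K)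
    (hcard : ∀ k ∈ Icc 1 K, #(Ψ k) = d)
    (hinter : ∀ k₁ ∈ Icc 1 K, ∀ k₂ ∈ Icc 1 K, k₁ ≠ k₂ → #(Ψ k₁ ∩ Ψ k₂) = c)
    (hd : 1 ≤ d) (hcd : c ≤ d) {i : ℕ} (hi : 1 ≤ i) :
    rcount (genNet K Ψ) i = genR d c ((i - 1) / K) := by
  have hk : (i - 1) % K + 1 ∈ Icc 1 K := mem_Icc.mpr ⟨by omega, Nat.mod_lt _ (by omega)⟩
  have hi' : (i - 1) / K * K + ((i - 1) % K + 1) = i := by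
    have := Nat.div_add_mod' (i - 1) K
    omega
  have hsum := (genEquicorrelated_genStats hsub hcard hinter hd hcd ((i - 1) / K) _ hk).1 (i + 1)
  rw [hi'] at hsum
  rw [rcount, range_eq_Ico, sum_eq_sum_Ico_succ_bot (by omega),
    eqW_apply_zero (zero_notMem_genNet hK hsub) (by omega), zero_add, hsum (by omega)]

end Generations

theorem tendsto_zero_of_le_mul_add {y ε : ℕ → ℝ} {q : ℝ} (hq0 : 0 ≤ q) (hq1 : q < 1)
    (hy : ∀ t, 0 ≤ y t) (hε : Tendsto ε atTop (𝓝 0))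
    (hrec : ∀ᶠ t in atTop, y (t + 1) ≤ q * y t + ε t) : Tendsto y atTop (𝓝 0) := by
  refine tendsto_order.2 ⟨fun a ha => Eventually.of_forall fun t => ha.trans_le (hy t),
    fun a ha => ?_⟩
  have hεa : ∀ᶠ t in atTop, ε t ≤ a * (1 - q) / 2 :=
    hε.eventually (eventually_le_nhds (by nlinarith))
  obtain ⟨T, hT⟩ := eventually_atTop.1 (hrec.and hεa)
  -- beyond `T`, the excess of `y` over `a / 2` decays geometrically
  have hgeom : ∀ n, y (T + n) - a / 2 ≤ q ^ n * (y T - a / 2) := fun n =>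
    le_geom (u := fun k => y (T + k) - a / 2) hq0 n fun k _ => by
      obtain ⟨h1, h2⟩ := hT (T + k) (by omega)
      simp only [← add_assoc]
      nlinarith
  have hpow : Tendsto (fun n => q ^ n * (y T - a / 2)) atTop (𝓝 0) := by
    simpa using (tendsto_pow_atTop_nhds_zero_of_lt_one hq0 hq1).mul_const (y T - a / 2)
  obtain ⟨N, hN⟩ := eventually_atTop.1 (hpow.eventually (eventually_lt_nhds (half_pos ha)))
  refine eventually_atTop.2 ⟨T + N, fun t ht => ?_⟩
  obtain ⟨n, rfl⟩ := Nat.exists_eq_add_of_le ht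
  have h1 := hgeom (N + n)
  have h2 := hN (N + n) (by omega)
  rw [← add_assoc] at h1
  linarith

theorem tendsto_of_eq_mul_add {x a : ℕ → ℝ} {l b : ℝ} (ha : Tendsto a atTop (𝓝 l))
    (hl : |l| < 1) (hrec : ∀ t, x (t + 1) = a t * x t + b) :
    Tendsto x atTop (𝓝 (b / (1 - l))) := by
  have hfix : b / (1 - l) = l * (b / (1 - l)) + b := by
    have : 1 - l ≠ 0 := by linarith [le_abs_self l]
    field_simp
    ring
  set x₀ := b / (1 - l)
  have hq : ∀ᶠ t in atTop, |a t| ≤ (1 + |l|) / 2 :=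
    (ha.abs.eventually (eventually_le_nhds (by linarith)))
  rw [tendsto_iff_dist_tendsto_zero]
  refine tendsto_zero_of_le_mul_add (q := (1 + |l|) / 2) (by positivity) (by linarith)
    (fun t => dist_nonneg) (ε := fun t => |a t - l| * |x₀|) ?_ ?_
  · simpa using ((ha.sub_const l).abs.mul_const |x₀|)
  · filter_upwards [hq] with t ht
    simp only [Real.dist_eq]
    calc |x (t + 1) - x₀| = |a t * (x t - x₀) + (a t - l) * x₀| := by
          congr 1; rw [hrec]; linear_combination -hfix
      _ ≤ |a t| * |x t - x₀| + |a t - l| * |x₀| := by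
          rw [← abs_mul, ← abs_mul]; exact abs_add_le _ _
      _ ≤ (1 + |l|) / 2 * |x t - x₀| + |a t - l| * |x₀| := by
          gcongr

theorem tendsto_div_natCast_of_tendsto_sub {f : ℕ → ℝ} {l : ℝ}
    (hf : Tendsto (fun t => f (t + 1) - f t) atTop (𝓝 l)) :
    Tendsto (fun t => f t / t) atTop (𝓝 l) := by
  have hmean : Tendsto (fun n : ℕ => (n : ℝ)⁻¹ * (f n - f 0)) atTop (𝓝 l) := by
    simpa only [sum_range_sub (f := f)] using hf.cesaro
  have hcorr : Tendsto (fun n : ℕ => (n : ℝ)⁻¹ * f 0) atTop (𝓝 0) := by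
    simpa using tendsto_inv_atTop_nhds_zero_nat.mul_const (f 0)
  simpa [div_eq_inv_mul, mul_sub] using hmean.add hcorr

theorem tendsto_natCast_pred_div_div {K : ℕ} (hK : 1 ≤ K) :
    Tendsto (fun i : ℕ => (((i - 1) / K : ℕ) : ℝ) / i) atTop (𝓝 (1 / K)) := by
  have hK' : (0 : ℝ) < K := by exact_mod_cast hK
  have hlower : Tendsto (fun i : ℕ => 1 / (K : ℝ) - 1 / i) atTop (𝓝 (1 / K)) := by
    simpa using tendsto_one_div_atTop_nhds_zero_nat.const_sub (1 / (K : ℝ))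
  refine tendsto_of_tendsto_of_tendsto_of_le_of_le' hlower tendsto_const_nhds ?_ ?_
  all_goals filter_upwards [eventually_ge_atTop 1] with i hi
  all_goals have hi' : (0 : ℝ) < i := by exact_mod_cast hi
  all_goals have hdiv := Nat.div_add_mod (i - 1) K
  all_goals have hmod := Nat.mod_lt (i - 1) (show 0 < K by omega)
  · have hle : (i : ℝ) ≤ K * (((i - 1) / K : ℕ) : ℝ) + K := by exact_mod_cast (by omega)
    rw [sub_le_iff_le_add, ← add_div, div_le_div_iff₀ hK' hi']
    nlinarith
  · have hle : (K : ℝ) * (((i - 1) / K : ℕ) : ℝ) ≤ i := by exact_mod_cast (by omega)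
    rw [div_le_div_iff₀ hi' hK']
    linarith

theorem tendsto_comp_natCast_pred_div_div {f : ℕ → ℝ} {l : ℝ} {K : ℕ} (hK : 1 ≤ K)
    (hf : Tendsto (fun t => f t / t) atTop (𝓝 l)) :
    Tendsto (fun i : ℕ => f ((i - 1) / K) / i) atTop (𝓝 (l / K)) := by
  have hgen : Tendsto (fun i : ℕ => (i - 1) / K) atTop atTop :=
    (Nat.tendsto_div_const_atTop (by omega)).comp (tendsto_sub_atTop_nat 1)
  have := (hf.comp hgen).mul (tendsto_natCast_pred_div_div hK)
  rw [mul_one_div] at this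
  refine this.congr' ?_
  filter_upwards [hgen.eventually_ne_atTop 0] with i hi
  simp only [Function.comp_apply]
  rw [div_mul_div_cancel₀ (by exact_mod_cast hi)]

section Asymptotics

variable {d c : ℕ}

theorem tendsto_genR_atTop (hd : 1 ≤ d) (hcd : c ≤ d) : Tendsto (genR d c) atTop atTop :=
  tendsto_atTop_mono (fun t => by linarith [(genR_bounds hd hcd t).1]) tendsto_natCast_atTop_atTop

theorem genU_succ_div_genR_succ_le (hd : 1 ≤ d) (hcd : c ≤ d) (t : ℕ) :
    genU d c (t + 1) / genR d c (t + 1) ≤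
      (d - c) / d * (genU d c t / genR d c t) + (genR d c (t + 1))⁻¹ := by
  obtain ⟨hr, hu, hur⟩ := genR_bounds hd hcd t
  have hrs := genR_le_genS hd hur
  have hs := genS_pos hd hcd t
  have hd' : (1 : ℝ) ≤ d := by exact_mod_cast hd
  have hdc : (0 : ℝ) ≤ d - c := by rw [sub_nonneg]; exact_mod_cast hcd
  have ht : (0 : ℝ) ≤ t := t.cast_nonneg
  rw [genU_succ, genR_succ]
  set r := genR d c t
  set u := genU d c t
  set s := genS d c t
  have hratio : r / s ≤ 1 := div_le_one_of_le₀ hrs hs.le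
  have hgain : (d - c) * (r / s) ^ 2 * u ≤ (d - c) / d * (u / r) * (1 + d * r ^ 2 / s) := by
    have h0 : 0 ≤ (d - c) * u * (r / s) :=
      mul_nonneg (mul_nonneg hdc (by linarith)) (div_nonneg (by linarith) hs.le)
    have h1 : 0 ≤ (d - c) / d * (u / r) :=
      mul_nonneg (div_nonneg hdc (by linarith)) (div_nonneg (by linarith) (by linarith))
    calc (d - c) * (r / s) ^ 2 * u = (d - c) * u * (r / s) * (r / s) := by ring
      _ ≤ (d - c) * u * (r / s) * 1 := by gcongr
      _ = (d - c) / d * (u / r) * (d * r ^ 2 / s) := by field_simp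
      _ ≤ (d - c) / d * (u / r) * (1 + d * r ^ 2 / s) := by gcongr; linarith
  have hr'pos : 0 < 1 + d * r ^ 2 / s := by positivity
  rw [div_le_iff₀ hr'pos, add_mul, inv_mul_cancel₀ hr'pos.ne']
  linarith

theorem tendsto_genU_div_genR (hc : 1 ≤ c) (hcd : c < d) :
    Tendsto (fun t => genU d c t / genR d c t) atTop (𝓝 0) := by
  have hd : 1 ≤ d := by omega
  have hc' : (1 : ℝ) ≤ c := by exact_mod_cast hc
  have hcd' : (c : ℝ) < d := by exact_mod_cast hcd
  refine tendsto_zero_of_le_mul_add (div_nonneg (by linarith) (by linarith))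
    ((div_lt_one (by linarith)).mpr (by linarith)) (fun t => ?_)
    ((tendsto_genR_atTop hd hcd.le).inv_tendsto_atTop.comp (tendsto_add_atTop_nat 1))
    (Eventually.of_forall (genU_succ_div_genR_succ_le hd hcd.le))
  obtain ⟨hr, hu, -⟩ := genR_bounds hd hcd.le t
  have : (0 : ℝ) ≤ t := t.cast_nonneg
  exact div_nonneg (by linarith) (by linarith)

theorem tendsto_genR_div_genS (hc : 1 ≤ c) (hcd : c < d) :
    Tendsto (fun t => genR d c t / genS d c t) atTop (𝓝 (d : ℝ)⁻¹) := by
  have hd : (0 : ℝ) < d := by exact_mod_cast (show 0 < d by omega)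
  have hsr : Tendsto (fun t => genS d c t / genR d c t) atTop (𝓝 d) := by
    have := ((tendsto_genU_div_genR hc hcd).const_mul ((d : ℝ) - 1)).const_sub (d : ℝ)
    rw [mul_zero, sub_zero] at this
    refine this.congr fun t => ?_
    have hr := (genR_bounds (by omega) hcd.le t).1
    have : (0 : ℝ) ≤ t := t.cast_nonneg
    have : genR d c t ≠ 0 := by linarith
    rw [genS]
    field_simp
  simpa only [inv_div] using hsr.inv₀ hd.ne'

theorem tendsto_genU (hc : 1 ≤ c) (hcd : c < d) :
    Tendsto (genU d c) atTop (𝓝 (d ^ 2 / (d ^ 2 - d + c))) := by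
  have hc' : (1 : ℝ) ≤ c := by exact_mod_cast hc
  have hcd' : (c : ℝ) + 1 ≤ d := by exact_mod_cast hcd
  have hd : (0 : ℝ) < d := by linarith
  have hlim := tendsto_of_eq_mul_add (x := genU d c) (b := 1)
    ((tendsto_const_nhds (x := (d : ℝ) - c)).mul ((tendsto_genR_div_genS hc hcd).pow 2)) ?_
    (fun t => by rw [genU_succ]; ring)
  · convert hlim using 2
    rw [inv_pow, ← div_eq_mul_inv, one_sub_div (by positivity), one_div_div]
    ring
  · have hl0 : 0 ≤ ((d : ℝ) - c) * (d : ℝ)⁻¹ ^ 2 := mul_nonneg (by linarith) (by positivity)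
    rw [abs_of_nonneg hl0, inv_pow, ← div_eq_mul_inv, div_lt_one (by positivity)]
    nlinarith

theorem genR_succ_sub_genR (hd : 1 ≤ d) (hcd : c ≤ d) (t : ℕ) :
    genR d c (t + 1) - genR d c t = 1 + (d - 1) * genU d c t * (genR d c t / genS d c t) := by
  have := (genS_pos hd hcd t).ne'
  rw [genR_succ]
  field_simp
  rw [genS]
  ring

theorem tendsto_genR_succ_sub_genR (hc : 1 ≤ c) (hcd : c < d) :
    Tendsto (fun t => genR d c (t + 1) - genR d c t) atTop
      (𝓝 (1 + d * (d - 1) / (d ^ 2 - d + c))) := by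
  have hd : (0 : ℝ) < d := by exact_mod_cast (show 0 < d by omega)
  have hlim := (((tendsto_genU hc hcd).const_mul ((d : ℝ) - 1)).mul
    (tendsto_genR_div_genS hc hcd)).const_add 1
  rw [show (1 + d * (d - 1) / (d ^ 2 - d + c) : ℝ) =
    1 + (d - 1) * (d ^ 2 / (d ^ 2 - d + c)) * (d : ℝ)⁻¹ by field_simp]
  exact hlim.congr fun t => (genR_succ_sub_genR (by omega) hcd.le t).symm

end Asymptotics

/-- In any generations network with generation size `K` associated
to symmetric observation sets with parameters `(d, c)` satisfying `d ≥ 2` and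
`c < d`, the aggregative efficiency exists and equals `(2 − 1/K)·(1/K)`; in
particular it depends only on `K` and coincides with the aggregative efficiency of
the maximal generations network with the same `K`. -/
theorem symmetric_generations_efficiency_cancellation (K d c : ℕ) (hK : 1 ≤ K)
    (hd : 2 ≤ d) (hcd : c < d) (Ψ : ℕ → Finset ℕ)
    (hsub : ∀ k ∈ Finset.Icc 1 K, Ψ k ⊆ Finset.Icc 1 K)
    (hcard : ∀ k ∈ Finset.Icc 1 K, (Ψ k).card = d)
    (hinter : ∀ k₁ ∈ Finset.Icc 1 K, ∀ k₂ ∈ Finset.Icc 1 K, k₁ ≠ k₂ →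
      ((Ψ k₁) ∩ (Ψ k₂)).card = c) :
    Tendsto (fun i : ℕ => rcount (genNet K Ψ) i / (i : ℝ)) atTop
      (nhds ((2 - 1 / (K : ℝ)) * (1 / (K : ℝ)))) := by
  have hdesign : (d : ℝ) ^ 2 = d + (K - 1) * c := by
    simpa using sq_eq_of_card_inter_eq (nonempty_Icc.mpr hK) hsub hcard hinter hcd
  have hc : 1 ≤ c := by
    by_contra! hc0
    have : (d : ℝ) ≤ 1 := by
      rw [Nat.lt_one_iff.mp hc0, Nat.cast_zero, mul_zero, add_zero] at hdesign
      nlinarith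
    have : (2 : ℝ) ≤ d := by exact_mod_cast hd
    linarith
  have hlim : Tendsto (fun t => genR d c t / t) atTop (𝓝 (2 - 1 / K)) := by
    convert tendsto_div_natCast_of_tendsto_sub (tendsto_genR_succ_sub_genR hc hcd) using 2
    rw [show (d : ℝ) ^ 2 - d + c = c * K by linarith, show (d : ℝ) * (d - 1) = c * (K - 1) by
      linarith]
    field_simp
    ring
  rw [← div_eq_mul_one_div]
  refine (tendsto_comp_natCast_pred_div_div hK hlim).congr' ?_
  filter_upwards [eventually_ge_atTop 1] with i hi
  rw [rcount_genNet hK hsub hcard hinter (by omega) hcd.le hi]
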